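/- Let 𝒰 ⊆ ℝ² be open, let r, Ω² : 𝒰 → (0,∞) be smooth, and suppose ∂_v( Ω^{−2} ∂_v r ) ≤ 0 on 𝒰 (as holds for any solution of the constraint equation ∂_v(Ω^{−2}∂_v r) = −4π r T_vv Ω^{−2} with T_vv ≥ 0). Let (ū,v̄) ∈ 𝒰 satisfy ∂_u r(ū,v̄) < 0 and 2m/r(ū,v̄) > 1. Then ∂_v r(ū,v̄) < 0, and for every v₁ ≥ v̄ with {ū} × [v̄,v₁] ⊆ 𝒰 one has Ω^{−2}∂_v r(ū,v) ≤ Ω^{−2}∂_v r(ū,v̄) < 0 for all v ∈ [v̄,v₁]; in particular r(ū,·) is strictly decreasing on [v̄,v₁], so r remains bounded above by r(ū,v̄) along the outgoing null ray {u = ū, v ≥ v̄}. -/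

import Mathlib

open Real MeasureTheory Filter Set Topology

noncomputable section

/-- Partial derivative of a function of two real variables in the first (`u`) variable. -/
def pdu (f : ℝ → ℝ → ℝ) (u v : ℝ) : ℝ := deriv (fun x => f x v) u

/-- Partial derivative of a function of two real variables in the second (`v`) variable. -/
def pdv (f : ℝ → ℝ → ℝ) (u v : ℝ) : ℝ := deriv (fun y => f u y) v

/-- The Hawking mass `m = (r/2)(1 + 4Ω⁻² ∂ᵤr ∂ᵥr)`. -/
def hawk (r Ω2 : ℝ → ℝ → ℝ) (u v : ℝ) : ℝ :=
  r u v / 2 * (1 + 4 * (Ω2 u v)⁻¹ * pdu r u v * pdv r u v)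

/-!
On a trapped sphere `2m/r - 1 = 4Ω⁻²∂ᵤr ∂ᵥr > 0`, so `∂ᵤr < 0` forces `∂ᵥr < 0`. Along the
outgoing ray `u = ū` the quantity `Ω⁻²∂ᵥr` is non-increasing, hence stays below its negative
value at `v̄`; since `Ω² > 0` this keeps `∂ᵥr < 0`, so `r` decreases along the whole ray.
-/

theorem two_mul_hawk_div {r Ω2 : ℝ → ℝ → ℝ} {u v : ℝ} (hr : r u v ≠ 0) :
    2 * hawk r Ω2 u v / r u v = 1 + 4 * (Ω2 u v)⁻¹ * pdu r u v * pdv r u v := by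
  unfold hawk
  field_simp

theorem pdv_neg_of_trapped {r Ω2 : ℝ → ℝ → ℝ} {u v : ℝ} (hΩ : 0 < Ω2 u v)
    (hu : pdu r u v < 0) (htrap : 1 < 2 * hawk r Ω2 u v / r u v) : pdv r u v < 0 := by
  have hr : r u v ≠ 0 := by
    rintro hr
    norm_num [hr] at htrap
  rw [two_mul_hawk_div hr] at htrap
  have hprod : 0 < pdu r u v * pdv r u v := by
    have : 0 < (Ω2 u v)⁻¹ * (pdu r u v * pdv r u v) := by linarith
    exact (mul_pos_iff_of_pos_left (inv_pos.2 hΩ)).1 this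
  exact neg_of_mul_pos_right hprod hu.le

theorem ContDiffOn.slice {U : Set (ℝ × ℝ)} {f : ℝ → ℝ → ℝ} {n : WithTop ℕ∞}
    (hf : ContDiffOn ℝ n (fun p : ℝ × ℝ => f p.1 p.2) U) (u : ℝ) :
    ContDiffOn ℝ n (f u) (Prod.mk u ⁻¹' U) :=
  hf.comp (contDiff_const.prodMk contDiff_id).contDiffOn fun _ hv => hv

theorem differentiableOn_inv_mul_deriv {S : Set ℝ} (hS : IsOpen S) {f w : ℝ → ℝ}
    (hf : ContDiffOn ℝ 2 f S) (hw : ContDiffOn ℝ 1 w S) (hw0 : ∀ y ∈ S, w y ≠ 0) :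
    DifferentiableOn ℝ (fun y => (w y)⁻¹ * deriv f y) S :=
  ((hw.inv hw0).mul (hf.deriv_of_isOpen hS le_rfl)).differentiableOn one_ne_zero

theorem antitoneOn_inv_mul_pdv {U : Set (ℝ × ℝ)} (hU : IsOpen U) {r Ω2 : ℝ → ℝ → ℝ}
    (hr : ContDiffOn ℝ 2 (fun p : ℝ × ℝ => r p.1 p.2) U)
    (hΩ : ContDiffOn ℝ 1 (fun p : ℝ × ℝ => Ω2 p.1 p.2) U) (hΩ0 : ∀ p ∈ U, Ω2 p.1 p.2 ≠ 0)
    {u v₀ v₁ : ℝ} (hray : ∀ v ∈ Icc v₀ v₁, (u, v) ∈ U)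
    (hderiv : ∀ v ∈ Icc v₀ v₁, pdv (fun a b => (Ω2 a b)⁻¹ * pdv r a b) u v ≤ 0) :
    AntitoneOn (fun v => (Ω2 u v)⁻¹ * pdv r u v) (Icc v₀ v₁) := by
  have hdiff : DifferentiableOn ℝ (fun v => (Ω2 u v)⁻¹ * pdv r u v) (Icc v₀ v₁) :=
    (differentiableOn_inv_mul_deriv (hU.preimage (by fun_prop)) (hr.slice u) (hΩ.slice u)
      fun v hv => hΩ0 _ hv).mono hray
  exact antitoneOn_of_deriv_nonpos (convex_Icc v₀ v₁) hdiff.continuousOn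
    (hdiff.mono interior_subset) fun v hv => hderiv v (interior_subset hv)

theorem trapped_sphere_in_black_hole_region_general
    (Udom : Set (ℝ × ℝ)) (hopen : IsOpen Udom)
    (r Ω2 : ℝ → ℝ → ℝ)
    (hΩpos : ∀ p ∈ Udom, 0 < Ω2 p.1 p.2)
    (hrs : ContDiffOn ℝ (⊤ : ℕ∞) (fun p : ℝ × ℝ => r p.1 p.2) Udom)
    (hΩs : ContDiffOn ℝ (⊤ : ℕ∞) (fun p : ℝ × ℝ => Ω2 p.1 p.2) Udom)
    (hconc : ∀ p ∈ Udom,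
      pdv (fun a b => (Ω2 a b)⁻¹ * pdv r a b) p.1 p.2 ≤ 0)
    (ub vb : ℝ) (hmem : (ub, vb) ∈ Udom)
    (hdur : pdu r ub vb < 0)
    (htrap : 1 < 2 * hawk r Ω2 ub vb / r ub vb) :
    pdv r ub vb < 0 ∧
      (Ω2 ub vb)⁻¹ * pdv r ub vb < 0 ∧
      ∀ v₁ : ℝ, vb ≤ v₁ → (∀ v ∈ Icc vb v₁, (ub, v) ∈ Udom) →
        (∀ v ∈ Icc vb v₁,
          (Ω2 ub v)⁻¹ * pdv r ub v ≤ (Ω2 ub vb)⁻¹ * pdv r ub vb) ∧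
        StrictAntiOn (fun v => r ub v) (Icc vb v₁) ∧
        ∀ v ∈ Icc vb v₁, r ub v ≤ r ub vb := by
  have hΩ : 0 < Ω2 ub vb := hΩpos _ hmem
  have hvr : pdv r ub vb < 0 := pdv_neg_of_trapped hΩ hdur htrap
  have hweighted : (Ω2 ub vb)⁻¹ * pdv r ub vb < 0 := mul_neg_of_pos_of_neg (inv_pos.2 hΩ) hvr
  refine ⟨hvr, hweighted, fun v₁ hv₁ hray => ?_⟩
  have hvb : vb ∈ Icc vb v₁ := left_mem_Icc.2 hv₁
  have hanti := antitoneOn_inv_mul_pdv hopen (hrs.of_le (WithTop.coe_le_coe.2 le_top))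
    (hΩs.of_le (WithTop.coe_le_coe.2 le_top)) (fun p hp => (hΩpos p hp).ne') hray
    fun v hv => hconc _ (hray v hv)
  have hle : ∀ v ∈ Icc vb v₁, (Ω2 ub v)⁻¹ * pdv r ub v ≤ (Ω2 ub vb)⁻¹ * pdv r ub vb :=
    fun v hv => hanti hvb hv hv.1
  have hneg : ∀ v ∈ Icc vb v₁, pdv r ub v < 0 := fun v hv =>
    neg_of_mul_neg_right ((hle v hv).trans_lt hweighted) (inv_pos.2 (hΩpos _ (hray v hv))).le
  have hdecr : StrictAntiOn (r ub) (Icc vb v₁) :=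
    strictAntiOn_of_deriv_neg (convex_Icc vb v₁)
      ((hrs.slice ub).continuousOn.mono hray) fun v hv => hneg v (interior_subset hv)
  exact ⟨hle, hdecr, fun v hv => hdecr.antitoneOn hvb hv hv.1⟩

/-- **A trapped sphere lies in the black hole region**: if `∂_v(Ω⁻²∂_v r) ≤ 0` (as for
any solution of the constraint `∂_v(Ω⁻²∂_v r) = −4πrT_vvΩ⁻²` with `T_vv ≥ 0`) and
`(ū,v̄)` is a trapped sphere (`2m/r > 1`) with `∂_u r(ū,v̄) < 0`, then `∂_v r(ū,v̄) < 0`,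
the quantity `Ω⁻²∂_v r` stays below its (negative) value at `(ū,v̄)` along the outgoing
null ray, and `r` is strictly decreasing — in particular bounded above by `r(ū,v̄)` —
along `{u = ū, v ≥ v̄}`. -/
theorem trapped_sphere_in_black_hole_region
    (Udom : Set (ℝ × ℝ)) (hopen : IsOpen Udom)
    (r Ω2 : ℝ → ℝ → ℝ)
    (hrpos : ∀ p ∈ Udom, 0 < r p.1 p.2) (hΩpos : ∀ p ∈ Udom, 0 < Ω2 p.1 p.2)
    (hrs : ContDiffOn ℝ (⊤ : ℕ∞) (fun p : ℝ × ℝ => r p.1 p.2) Udom)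
    (hΩs : ContDiffOn ℝ (⊤ : ℕ∞) (fun p : ℝ × ℝ => Ω2 p.1 p.2) Udom)
    (hconc : ∀ p ∈ Udom,
      pdv (fun a b => (Ω2 a b)⁻¹ * pdv r a b) p.1 p.2 ≤ 0)
    (ub vb : ℝ) (hmem : (ub, vb) ∈ Udom)
    (hdur : pdu r ub vb < 0)
    (htrap : 1 < 2 * hawk r Ω2 ub vb / r ub vb) :
    pdv r ub vb < 0 ∧
      (Ω2 ub vb)⁻¹ * pdv r ub vb < 0 ∧
      ∀ v₁ : ℝ, vb ≤ v₁ → (∀ v ∈ Icc vb v₁, (ub, v) ∈ Udom) →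
        (∀ v ∈ Icc vb v₁,
          (Ω2 ub v)⁻¹ * pdv r ub v ≤ (Ω2 ub vb)⁻¹ * pdv r ub vb) ∧
        StrictAntiOn (fun v => r ub v) (Icc vb v₁) ∧
        ∀ v ∈ Icc vb v₁, r ub v ≤ r ub vb :=
  trapped_sphere_in_black_hole_region_general Udom hopen r Ω2 hΩpos hrs hΩs hconc ub vb hmem hdur
    htrap

end
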